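/- arXiv:1612.08198 — 2 statements merged into one kernel-verified Lean document; each statement's English description precedes it below -/
import Mathlib

section
/- Let d ≥ 1, let a be a jump kernel and b a rate-perturbation kernel, let ω ≥ 0, and let ϑ'' < ϑ be real numbers. Then for every correlation-type function k with ‖k‖_{ϑ''} < ∞, the function L^Δ k = A^Δ k + B^Δ k + C^Δ k + D^Δ k satisfies ‖L^Δ k‖_ϑ ≤ 2( (1 + ⟨b⟩ e^{ϑ}) / (e (ϑ − ϑ'')) + 4 b̄ / (e² (ϑ − ϑ'')²) ) ‖k‖_{ϑ''}. In particular L^Δ defines a bounded linear operator from K_{ϑ''} to K_ϑ. (Estimate (3.13) of the paper.) -/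
open MeasureTheory ENNReal Real Filter Finset

namespace Kawasaki

abbrev Rd (d : ℕ) := Fin d → ℝ

structure JumpKernel (d : ℕ) where
  a : Rd d → Rd d → ℝ
  measurable : Measurable fun p : Rd d × Rd d => a p.1 p.2
  nonneg : ∀ x y, 0 ≤ a x y
  symm : ∀ x y, a x y = a y x
  integrable : ∀ y, Integrable fun x => a x y
  sup_integral : (⨆ y : Rd d, ∫ x, a x y) = 1

structure RateKernel (d : ℕ) where
  b : Rd d → Rd d → Rd d → ℝ
  measurable : Measurable fun p : Rd d × Rd d × Rd d => b p.1 p.2.1 p.2.2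
  nonneg : ∀ x y z, 0 ≤ b x y z
  integrable : ∀ x y, Integrable fun z => b x y z
  int_bddAbove : BddAbove (Set.range fun p : Rd d × Rd d => ∫ z, b p.1 p.2 z)
  bddAbove : BddAbove (Set.range fun p : Rd d × Rd d × Rd d => b p.1 p.2.1 p.2.2)

/-- ⟨b⟩ -/
noncomputable def RateKernel.avg {d : ℕ} (B : RateKernel d) : ℝ :=
  ⨆ p : Rd d × Rd d, ∫ z, B.b p.1 p.2 z

/-- b̄ -/
noncomputable def RateKernel.bbar {d : ℕ} (B : RateKernel d) : ℝ :=
  ⨆ p : Rd d × Rd d × Rd d, B.b p.1 p.2.1 p.2.2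

abbrev Fam (d : ℕ) := ∀ n : ℕ, (Fin n → Rd d) → ℝ

structure CorrFun (d : ℕ) where
  k : Fam d
  measurable : ∀ n, Measurable (k n)
  symm : ∀ (n : ℕ) (σ : Equiv.Perm (Fin n)) (x : Fin n → Rd d), k n (x ∘ σ) = k n x

noncomputable def esssupAbs (d n : ℕ) (f : (Fin n → Rd d) → ℝ) : ℝ≥0∞ :=
  essSup (fun x => ENNReal.ofReal |f x|) volume

noncomputable def famNorm (d : ℕ) (f : Fam d) (ϑ : ℝ) : ℝ≥0∞ :=
  ⨆ n : ℕ, ENNReal.ofReal (Real.exp (-ϑ * n)) * esssupAbs d n (f n)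

noncomputable def phiPlus (d : ℕ) (A : JumpKernel d) (B : RateKernel d) (x y : Rd d) : ℝ :=
  ∫ z, A.a z x * B.b z x y

noncomputable def phiMinus (d : ℕ) (A : JumpKernel d) (B : RateKernel d) (x y : Rd d) : ℝ :=
  ∫ z, A.a x z * B.b x z y

noncomputable def PhiPlus (d : ℕ) (A : JumpKernel d) (B : RateKernel d) (n : ℕ)
    (x : Fin n → Rd d) : ℝ :=
  ∑ i : Fin n, ∑ j ∈ Finset.univ.erase i, phiPlus d A B (x i) (x j)

noncomputable def PhiMinus (d : ℕ) (A : JumpKernel d) (B : RateKernel d) (n : ℕ)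
    (x : Fin n → Rd d) : ℝ :=
  ∑ i : Fin n, ∑ j ∈ Finset.univ.erase i, phiMinus d A B (x i) (x j)

noncomputable def Psi (d : ℕ) (A : JumpKernel d) (B : RateKernel d) (n : ℕ)
    (x : Fin n → Rd d) : ℝ :=
  (∑ i : Fin n, ∫ y, A.a (x i) y) + PhiMinus d A B n x

noncomputable def ADelta (d : ℕ) (A : JumpKernel d) (B : RateKernel d) (k : Fam d) : Fam d :=
  fun n x => ∑ i : Fin n, ∫ x',
    A.a x' (x i) * (1 + ∑ j ∈ Finset.univ.erase i, B.b x' (x i) (x j)) *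
      k n (Function.update x i x')

noncomputable def BDelta (d : ℕ) (A : JumpKernel d) (B : RateKernel d) (k : Fam d) : Fam d :=
  fun n x => -(Psi d A B n x) * k n x

noncomputable def BDeltaOmega (d : ℕ) (A : JumpKernel d) (B : RateKernel d) (ω : ℝ)
    (k : Fam d) : Fam d :=
  fun n x => -(Psi d A B n x + ω * n) * k n x

noncomputable def CDelta (d : ℕ) (A : JumpKernel d) (B : RateKernel d) (k : Fam d) : Fam d :=
  fun n x => ∑ i : Fin n, ∫ x', ∫ z,
    A.a x' (x i) * B.b x' (x i) z * k (n + 1) (Fin.snoc (Function.update x i x') z)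

noncomputable def CDeltaOmega (d : ℕ) (A : JumpKernel d) (B : RateKernel d) (ω : ℝ)
    (k : Fam d) : Fam d :=
  fun n x => CDelta d A B k n x + ω * n * k n x

noncomputable def DDelta (d : ℕ) (A : JumpKernel d) (B : RateKernel d) (k : Fam d) : Fam d :=
  fun n x => -∫ z, (∑ i : Fin n, ∫ y, A.a (x i) y * B.b (x i) y z) * k (n + 1) (Fin.snoc x z)

noncomputable def LDelta (d : ℕ) (A : JumpKernel d) (B : RateKernel d) (k : Fam d) : Fam d :=
  fun n x => ADelta d A B k n x + BDelta d A B k n x + CDelta d A B k n x + DDelta d A B k n x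

/-!
Each of the four parts of `L^Δ k` is bounded a.e. on `n`-point configurations using only
`∫ a ≤ 1`, `b ≤ b̄` and `∫ b ≤ ⟨b⟩`: the parts `A^Δ`, `B^Δ` by `n (1 + n b̄) ‖k‖ e^{ϑ'' n}`, and
the parts `C^Δ`, `D^Δ`, which see `k⁽ⁿ⁺¹⁾`, by `n ⟨b⟩ ‖k‖ e^{ϑ'' (n + 1)}`. After weighting
with `e^{-ϑ n}` one is left with `n` and `n²` against `e^{-(ϑ - ϑ'') n}`, and
`sup_t t e^{-α t} = 1 / (e α)`, `sup_t t² e^{-α t} = 4 / (e α)²` give the constant.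
The a.e. bounds on `k` survive replacing one coordinate or appending one, by Fubini.
-/

section Fubini

variable {α : Type*} [MeasureSpace α] [SigmaFinite (volume : Measure α)] {n : ℕ}

theorem ae_ae_insertNth (i : Fin (n + 1)) {P : (Fin (n + 1) → α) → Prop} (h : ∀ᵐ y, P y) :
    ∀ᵐ r : Fin n → α, ∀ᵐ x : α, P (i.insertNth x r) := by
  have hprod : ∀ᵐ p : α × (Fin n → α), P (i.insertNth p.1 p.2) :=
    (volume_preserving_piFinSuccAbove (fun _ => α) i).symm.quasiMeasurePreserving.ae h
  exact Measure.ae_ae_of_ae_prod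
    (Measure.measurePreserving_swap.quasiMeasurePreserving.ae hprod)

theorem ae_ae_update (i : Fin n) {P : (Fin n → α) → Prop} (h : ∀ᵐ y, P y) :
    ∀ᵐ x : Fin n → α, ∀ᵐ x' : α, P (Function.update x i x') := by
  obtain ⟨m, rfl⟩ : ∃ m, n = m + 1 := Nat.exists_eq_add_one_of_ne_zero i.pos.ne'
  have hremove : ∀ᵐ x : Fin (m + 1) → α, ∀ᵐ x' : α, P (i.insertNth x' (i.removeNth x)) :=
    (Measure.quasiMeasurePreserving_snd.comp
      (volume_preserving_piFinSuccAbove (fun _ => α) i).quasiMeasurePreserving).ae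
      (ae_ae_insertNth i h)
  simpa only [Fin.insertNth_removeNth] using hremove

theorem ae_ae_snoc {P : (Fin (n + 1) → α) → Prop} (h : ∀ᵐ y, P y) :
    ∀ᵐ x : Fin n → α, ∀ᵐ z : α, P (Fin.snoc x z) := by
  simpa only [Fin.insertNth_last'] using ae_ae_insertNth (Fin.last n) h

end Fubini

theorem abs_integral_le_mul_integral {X : Type*} [MeasurableSpace X] {μ : Measure X}
    {f g : X → ℝ} {C : ℝ} (hg : Integrable g μ) (hfg : ∀ᵐ x ∂μ, |f x| ≤ C * g x) :
    |∫ x, f x ∂μ| ≤ C * ∫ x, g x ∂μ := by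
  rw [← integral_const_mul]
  exact norm_integral_le_of_norm_le (f := f) (hg.const_mul C) hfg

theorem abs_sum_le_card_mul {ι : Type*} (s : Finset ι) {f : ι → ℝ} {C : ℝ}
    (hf : ∀ i ∈ s, |f i| ≤ C) : |∑ i ∈ s, f i| ≤ s.card * C :=
  (Finset.abs_sum_le_sum_abs f s).trans <| by
    simpa only [nsmul_eq_mul] using Finset.sum_le_card_nsmul s _ C hf

theorem sum_erase_le_mul {n : ℕ} (i : Fin n) {f : Fin n → ℝ} {C : ℝ} (hC : 0 ≤ C)
    (hf : ∀ j, f j ≤ C) : ∑ j ∈ univ.erase i, f j ≤ n * C := by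
  calc ∑ j ∈ univ.erase i, f j ≤ (univ.erase i).card * C := by
        simpa only [nsmul_eq_mul] using Finset.sum_le_card_nsmul _ f C fun j _ => hf j
    _ ≤ n * C := by
        gcongr
        simp

theorem mul_exp_neg_mul_le {a : ℝ} (ha : 0 < a) (t : ℝ) :
    t * Real.exp (-(a * t)) ≤ (Real.exp 1 * a)⁻¹ := by
  have h := Real.mul_exp_neg_le_exp_neg_one (a * t)
  rw [Real.exp_neg 1, mul_assoc] at h
  rw [mul_inv, ← div_eq_mul_inv, le_div_iff₀ ha]
  linarith

theorem sq_mul_exp_neg_mul_le {a t : ℝ} (ha : 0 < a) (ht : 0 ≤ t) :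
    t ^ 2 * Real.exp (-(a * t)) ≤ 4 / (Real.exp 1 ^ 2 * a ^ 2) := by
  -- split `exp (-(a t))` into two halves and bound each factor `t exp (-(a/2) t)`
  have h := pow_le_pow_left₀ (by positivity) (mul_exp_neg_mul_le (half_pos ha) t) 2
  calc t ^ 2 * Real.exp (-(a * t)) = (t * Real.exp (-(a / 2 * t))) ^ 2 := by
        rw [mul_pow, ← Real.exp_nat_mul]; ring_nf
    _ ≤ ((Real.exp 1 * (a / 2))⁻¹) ^ 2 := h
    _ = 4 / (Real.exp 1 ^ 2 * a ^ 2) := by field_simp; ring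

theorem linear_add_quadratic_le_exp {a t p q : ℝ} (ha : 0 < a) (ht : 0 ≤ t) (hp : 0 ≤ p)
    (hq : 0 ≤ q) :
    p * t + q * t ^ 2 ≤
      Real.exp (a * t) * (p / (Real.exp 1 * a) + 4 * q / (Real.exp 1 ^ 2 * a ^ 2)) := by
  have hexp : Real.exp (a * t) * Real.exp (-(a * t)) = 1 := by rw [← Real.exp_add]; simp
  calc p * t + q * t ^ 2
      = Real.exp (a * t) * (p * (t * Real.exp (-(a * t))) + q * (t ^ 2 * Real.exp (-(a * t)))) := by
        linear_combination (p * t + q * t ^ 2) * (-hexp)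
    _ ≤ Real.exp (a * t) * (p * (Real.exp 1 * a)⁻¹ + q * (4 / (Real.exp 1 ^ 2 * a ^ 2))) := by
        gcongr
        · exact mul_exp_neg_mul_le ha t
        · exact sq_mul_exp_neg_mul_le ha ht
    _ = _ := by ring

section Kernels

variable {d : ℕ} (A : JumpKernel d) (B : RateKernel d)

theorem JumpKernel.integral_fst_le_one (y : Rd d) : ∫ x, A.a x y ≤ 1 := by
  have hbdd : BddAbove (Set.range fun y : Rd d => ∫ x, A.a x y) := by
    by_contra h
    simpa [Real.iSup_of_not_bddAbove h] using A.sup_integral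
  exact A.sup_integral ▸ le_ciSup hbdd y

theorem JumpKernel.integrable_snd (x : Rd d) : Integrable fun y => A.a x y := by
  simpa only [A.symm x] using A.integrable x

theorem JumpKernel.integral_snd_le_one (x : Rd d) : ∫ y, A.a x y ≤ 1 := by
  simpa only [A.symm x] using A.integral_fst_le_one x

theorem JumpKernel.abs_integral_le {f : Rd d → ℝ} {C : ℝ} (hC : 0 ≤ C) (u : Rd d)
    (hf : ∀ᵐ x, |f x| ≤ C * A.a x u) : |∫ x, f x| ≤ C :=
  (abs_integral_le_mul_integral (A.integrable u) hf).trans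
    (mul_le_of_le_one_right hC (A.integral_fst_le_one u))

theorem RateKernel.le_bbar (x y z : Rd d) : B.b x y z ≤ B.bbar :=
  le_ciSup B.bddAbove (x, y, z)

theorem RateKernel.bbar_nonneg : 0 ≤ B.bbar :=
  (B.nonneg 0 0 0).trans (B.le_bbar 0 0 0)

theorem RateKernel.integral_le_avg (x y : Rd d) : ∫ z, B.b x y z ≤ B.avg :=
  le_ciSup B.int_bddAbove (x, y)

theorem RateKernel.avg_nonneg : 0 ≤ B.avg :=
  (integral_nonneg (B.nonneg 0 0)).trans (B.integral_le_avg 0 0)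

theorem phiMinus_le_bbar (u v : Rd d) : phiMinus d A B u v ≤ B.bbar := by
  calc phiMinus d A B u v ≤ |∫ z, A.a u z * B.b u z v| := le_abs_self _
    _ ≤ B.bbar * ∫ z, A.a u z := by
        refine abs_integral_le_mul_integral (A.integrable_snd u) (ae_of_all _ fun z => ?_)
        rw [abs_of_nonneg (mul_nonneg (A.nonneg u z) (B.nonneg u z v)), mul_comm]
        exact mul_le_mul_of_nonneg_right (B.le_bbar u z v) (A.nonneg u z)
    _ ≤ B.bbar := mul_le_of_le_one_right B.bbar_nonneg (A.integral_snd_le_one u)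

theorem Psi_nonneg {n : ℕ} (x : Fin n → Rd d) : 0 ≤ Psi d A B n x :=
  add_nonneg (sum_nonneg fun i _ => integral_nonneg (A.nonneg (x i)))
    (sum_nonneg fun _ _ => sum_nonneg fun _ _ =>
      integral_nonneg fun z => mul_nonneg (A.nonneg _ z) (B.nonneg _ z _))

theorem Psi_le {n : ℕ} (x : Fin n → Rd d) : Psi d A B n x ≤ n * (1 + n * B.bbar) := by
  have hjump : ∑ i, ∫ y, A.a (x i) y ≤ n := by
    simpa using sum_le_sum fun i (_ : i ∈ univ) => A.integral_snd_le_one (x i)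
  have hrate : PhiMinus d A B n x ≤ n * (n * B.bbar) := by
    calc PhiMinus d A B n x ≤ ∑ _i : Fin n, n * B.bbar := sum_le_sum fun i _ =>
          sum_erase_le_mul i B.bbar_nonneg fun j => phiMinus_le_bbar A B (x i) (x j)
      _ = n * (n * B.bbar) := by simp
  rw [Psi]
  linarith

/-- `a(u, y) b(u, y | z)` is the rate of the jump `u → y` perturbed by a particle at `z`;
integrating out `y` gives the kernel of `D^Δ`. -/
theorem integrable_jumpRate (u : Rd d) :
    Integrable (Function.uncurry fun y z => A.a u y * B.b u y z) (volume.prod volume) := by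
  have hmeas : Measurable (Function.uncurry fun y z => A.a u y * B.b u y z) :=
    (A.measurable.comp (measurable_const.prodMk measurable_fst)).mul
      (B.measurable.comp (measurable_const.prodMk measurable_id))
  refine (integrable_prod_iff hmeas.aestronglyMeasurable).2
    ⟨ae_of_all _ fun y => (B.integrable u y).const_mul (A.a u y), ?_⟩
  refine Integrable.mono' ((A.integrable_snd u).mul_const B.avg)
    hmeas.aestronglyMeasurable.norm.integral_prod_right' (ae_of_all _ fun y => ?_)
  have hnonneg : ∀ z, 0 ≤ A.a u y * B.b u y z :=
    fun z => mul_nonneg (A.nonneg u y) (B.nonneg u y z)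
  simp only [Function.uncurry_apply_pair, Real.norm_eq_abs, abs_of_nonneg (hnonneg _)]
  rw [abs_of_nonneg (integral_nonneg hnonneg), integral_const_mul]
  exact mul_le_mul_of_nonneg_left (B.integral_le_avg u y) (A.nonneg u y)

theorem integral_integral_jumpRate_le (u : Rd d) :
    ∫ z, ∫ y, A.a u y * B.b u y z ≤ B.avg := by
  rw [← integral_integral_swap (integrable_jumpRate A B u)]
  calc ∫ y, ∫ z, A.a u y * B.b u y z ≤ ∫ y, A.a u y * B.avg := by
        refine integral_mono ?_ ((A.integrable_snd u).mul_const _) fun y => ?_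
        · exact (integrable_jumpRate A B u).integral_prod_left
        · simp only [integral_const_mul]
          exact mul_le_mul_of_nonneg_left (B.integral_le_avg u y) (A.nonneg u y)
    _ ≤ B.avg := by
        rw [integral_mul_const]
        exact mul_le_of_le_one_left B.avg_nonneg (A.integral_snd_le_one u)

end Kernels

section Estimates

variable {d : ℕ} (A : JumpKernel d) (B : RateKernel d) {k : Fam d} {n : ℕ} {M : ℝ}

theorem ae_abs_ADelta_le (hM : 0 ≤ M) (hk : ∀ᵐ y, |k n y| ≤ M) :
    ∀ᵐ x, |ADelta d A B k n x| ≤ n * ((1 + n * B.bbar) * M) := by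
  filter_upwards [ae_all_iff.2 fun i => ae_ae_update i hk] with x hx
  refine (abs_sum_le_card_mul univ fun i _ => A.abs_integral_le (C := (1 + n * B.bbar) * M)
    (mul_nonneg (by have := B.bbar_nonneg; positivity) hM) (x i) ?_).trans_eq ?_
  · filter_upwards [hx i] with x' hx'
    have hrate : 0 ≤ 1 + ∑ j ∈ univ.erase i, B.b x' (x i) (x j) :=
      add_nonneg zero_le_one (sum_nonneg fun j _ => B.nonneg _ _ _)
    have hsum := sum_erase_le_mul i B.bbar_nonneg fun j => B.le_bbar x' (x i) (x j)
    have ha := A.nonneg x' (x i)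
    rw [abs_mul, abs_mul, abs_of_nonneg ha, abs_of_nonneg hrate]
    calc A.a x' (x i) * (1 + ∑ j ∈ univ.erase i, B.b x' (x i) (x j)) *
          |k n (Function.update x i x')|
        ≤ A.a x' (x i) * (1 + n * B.bbar) * M :=
          mul_le_mul (mul_le_mul_of_nonneg_left (by linarith) ha) hx' (abs_nonneg _)
            (mul_nonneg ha (by linarith))
      _ = (1 + n * B.bbar) * M * A.a x' (x i) := by ring
  · simp

theorem abs_BDelta_le {x : Fin n → Rd d} (hk : |k n x| ≤ M) :
    |BDelta d A B k n x| ≤ n * ((1 + n * B.bbar) * M) := by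
  rw [BDelta, abs_mul, abs_neg, abs_of_nonneg (Psi_nonneg A B x), ← mul_assoc]
  exact mul_le_mul (Psi_le A B x) hk (abs_nonneg _) (by have := B.bbar_nonneg; positivity)

theorem ae_abs_CDelta_le (hM : 0 ≤ M) (hk : ∀ᵐ y, |k (n + 1) y| ≤ M) :
    ∀ᵐ x, |CDelta d A B k n x| ≤ n * (B.avg * M) := by
  filter_upwards [ae_all_iff.2 fun i => ae_ae_update i (ae_ae_snoc hk)] with x hx
  refine (abs_sum_le_card_mul univ fun i _ => A.abs_integral_le
    (mul_nonneg B.avg_nonneg hM) (x i) ?_).trans_eq ?_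
  · filter_upwards [hx i] with x' hx'
    calc |∫ z, A.a x' (x i) * B.b x' (x i) z * k (n + 1) (Fin.snoc (Function.update x i x') z)|
        ≤ A.a x' (x i) * M * ∫ z, B.b x' (x i) z := by
          refine abs_integral_le_mul_integral (B.integrable _ _) ?_
          filter_upwards [hx'] with z hz
          rw [abs_mul, abs_mul, abs_of_nonneg (A.nonneg _ _), abs_of_nonneg (B.nonneg _ _ _)]
          rw [mul_right_comm (A.a x' (x i)) M]
          exact mul_le_mul_of_nonneg_left hz (mul_nonneg (A.nonneg _ _) (B.nonneg _ _ _))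
      _ ≤ B.avg * M * A.a x' (x i) := by
          have := mul_le_mul_of_nonneg_left (B.integral_le_avg x' (x i))
            (mul_nonneg (A.nonneg x' (x i)) hM)
          linarith
  · simp

theorem ae_abs_DDelta_le (hM : 0 ≤ M) (hk : ∀ᵐ y, |k (n + 1) y| ≤ M) :
    ∀ᵐ x, |DDelta d A B k n x| ≤ n * (B.avg * M) := by
  filter_upwards [ae_ae_snoc hk] with x hx
  set H : Rd d → ℝ := fun z => ∑ i, ∫ y, A.a (x i) y * B.b (x i) y z
  have hH : ∀ z, 0 ≤ H z := fun z => sum_nonneg fun i _ =>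
    integral_nonneg fun y => mul_nonneg (A.nonneg _ _) (B.nonneg _ _ _)
  have hHint : ∀ i ∈ univ, Integrable fun z => ∫ y, A.a (x i) y * B.b (x i) y z :=
    fun i _ => (integrable_jumpRate A B (x i)).integral_prod_right
  have hHmass : ∫ z, H z ≤ n * B.avg := by
    rw [integral_finsetSum _ hHint]
    simpa using sum_le_sum fun i (_ : i ∈ univ) => integral_integral_jumpRate_le A B (x i)
  rw [DDelta, abs_neg]
  calc |∫ z, H z * k (n + 1) (Fin.snoc x z)| ≤ M * ∫ z, H z := by
        refine abs_integral_le_mul_integral (integrable_finsetSum _ hHint) ?_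
        filter_upwards [hx] with z hz
        rw [abs_mul, abs_of_nonneg (hH z), mul_comm M]
        exact mul_le_mul_of_nonneg_left hz (hH z)
    _ ≤ n * (B.avg * M) := by linarith [mul_le_mul_of_nonneg_left hHmass hM]

theorem ae_abs_LDelta_le {M' : ℝ} (hM : 0 ≤ M) (hM' : 0 ≤ M') (hk : ∀ᵐ y, |k n y| ≤ M)
    (hk' : ∀ᵐ y, |k (n + 1) y| ≤ M') :
    ∀ᵐ x, |LDelta d A B k n x| ≤ 2 * n * ((1 + n * B.bbar) * M) + 2 * n * (B.avg * M') := by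
  filter_upwards [ae_abs_ADelta_le A B hM hk, hk, ae_abs_CDelta_le A B hM' hk',
    ae_abs_DDelta_le A B hM' hk'] with x hA hkx hC hD
  have hB := abs_BDelta_le A B hkx
  rw [LDelta]
  linarith [abs_add_le (ADelta d A B k n x) (BDelta d A B k n x),
    abs_add_le (ADelta d A B k n x + BDelta d A B k n x) (CDelta d A B k n x),
    abs_add_le (ADelta d A B k n x + BDelta d A B k n x + CDelta d A B k n x)
      (DDelta d A B k n x)]

theorem ae_abs_LDelta_le_exp {ϑ'' ϑ C : ℝ} (hϑ : ϑ'' < ϑ) (hC : 0 ≤ C)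
    (hk : ∀ m, ∀ᵐ y, |k m y| ≤ Real.exp (ϑ'' * m) * C) :
    ∀ n, ∀ᵐ x, |LDelta d A B k n x| ≤ Real.exp (ϑ * n) *
      (2 * ((1 + B.avg * Real.exp ϑ) / (Real.exp 1 * (ϑ - ϑ'')) +
        4 * B.bbar / (Real.exp 1 ^ 2 * (ϑ - ϑ'') ^ 2)) * C) := by
  intro n
  filter_upwards [ae_abs_LDelta_le A B (by positivity) (by positivity) (hk n) (hk (n + 1))]
    with x hx
  have hgrowth := linear_add_quadratic_le_exp (t := n) (sub_pos.2 hϑ) n.cast_nonneg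
    (p := 2 * (1 + B.avg * Real.exp ϑ)) (q := 2 * B.bbar)
    (by have := B.avg_nonneg; positivity) (by have := B.bbar_nonneg; positivity)
  have hexp : Real.exp ϑ'' ≤ Real.exp ϑ := Real.exp_le_exp.2 hϑ.le
  refine hx.trans ?_
  calc 2 * n * ((1 + n * B.bbar) * (Real.exp (ϑ'' * n) * C)) +
        2 * n * (B.avg * (Real.exp (ϑ'' * (n + 1 : ℕ)) * C))
      = Real.exp (ϑ'' * n) * C *
          (2 * (1 + B.avg * Real.exp ϑ'') * n + 2 * B.bbar * n ^ 2) := by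
        push_cast; rw [mul_add, mul_one, Real.exp_add]; ring
    _ ≤ Real.exp (ϑ'' * n) * C * (2 * (1 + B.avg * Real.exp ϑ) * n + 2 * B.bbar * n ^ 2) := by
        have := B.avg_nonneg
        gcongr
    _ ≤ Real.exp (ϑ'' * n) * C * (Real.exp ((ϑ - ϑ'') * n) *
          (2 * (1 + B.avg * Real.exp ϑ) / (Real.exp 1 * (ϑ - ϑ'')) +
            4 * (2 * B.bbar) / (Real.exp 1 ^ 2 * (ϑ - ϑ'') ^ 2))) := by
        gcongr
    _ = _ := by
        rw [show ϑ * n = ϑ'' * n + (ϑ - ϑ'') * n by ring, Real.exp_add]; ring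

end Estimates

theorem ae_abs_le_of_famNorm_le {d : ℕ} {f : Fam d} {ϑ C : ℝ} (hC : 0 ≤ C)
    (hf : famNorm d f ϑ ≤ ENNReal.ofReal C) (n : ℕ) :
    ∀ᵐ x, |f n x| ≤ Real.exp (ϑ * n) * C := by
  have hexp : ENNReal.ofReal (Real.exp (ϑ * n)) * ENNReal.ofReal (Real.exp (-ϑ * n)) = 1 := by
    rw [← ENNReal.ofReal_mul (Real.exp_nonneg _), ← Real.exp_add]; simp
  have hsup : esssupAbs d n (f n) ≤ ENNReal.ofReal (Real.exp (ϑ * n) * C) := by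
    calc esssupAbs d n (f n) = ENNReal.ofReal (Real.exp (ϑ * n)) *
          (ENNReal.ofReal (Real.exp (-ϑ * n)) * esssupAbs d n (f n)) := by
          rw [← mul_assoc, hexp, one_mul]
      _ ≤ ENNReal.ofReal (Real.exp (ϑ * n)) * ENNReal.ofReal C :=
          mul_le_mul_right ((le_iSup (fun m : ℕ => _) n).trans hf) _
      _ = ENNReal.ofReal (Real.exp (ϑ * n) * C) := (ENNReal.ofReal_mul (Real.exp_nonneg _)).symm
  filter_upwards [ae_le_essSup (fun x => ENNReal.ofReal |f n x|)] with x hx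
  exact (ENNReal.ofReal_le_ofReal_iff (by positivity)).1 (hx.trans hsup)

theorem famNorm_le_of_ae_abs_le {d : ℕ} {f : Fam d} {ϑ C : ℝ}
    (hf : ∀ n, ∀ᵐ x, |f n x| ≤ Real.exp (ϑ * n) * C) :
    famNorm d f ϑ ≤ ENNReal.ofReal C := by
  refine iSup_le fun n => ?_
  calc ENNReal.ofReal (Real.exp (-ϑ * n)) * esssupAbs d n (f n)
      ≤ ENNReal.ofReal (Real.exp (-ϑ * n)) * ENNReal.ofReal (Real.exp (ϑ * n) * C) := by
        refine mul_le_mul_right (essSup_le_of_ae_le _ ?_) _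
        filter_upwards [hf n] with x hx
        exact ENNReal.ofReal_le_ofReal hx
    _ = ENNReal.ofReal C := by
        rw [← ENNReal.ofReal_mul (Real.exp_nonneg _), ← mul_assoc, ← Real.exp_add]; simp

theorem LDelta_norm_bound_general (d : ℕ) (A : JumpKernel d) (B : RateKernel d)
    (ϑ'' ϑ : ℝ) (hϑ : ϑ'' < ϑ)
    (k : CorrFun d) (hk : famNorm d k.k ϑ'' < ⊤) :
    famNorm d (LDelta d A B k.k) ϑ ≤
      ENNReal.ofReal (2 * ((1 + B.avg * Real.exp ϑ) / (Real.exp 1 * (ϑ - ϑ'')) +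
        4 * B.bbar / (Real.exp 1 ^ 2 * (ϑ - ϑ'') ^ 2))) * famNorm d k.k ϑ'' ∧
    famNorm d (LDelta d A B k.k) ϑ < ⊤ := by
  set N := famNorm d k.k ϑ''
  have hN : ENNReal.ofReal N.toReal = N := ENNReal.ofReal_toReal hk.ne
  have hbound := famNorm_le_of_ae_abs_le <| ae_abs_LDelta_le_exp A B hϑ ENNReal.toReal_nonneg
    (ae_abs_le_of_famNorm_le ENNReal.toReal_nonneg hN.ge)
  rw [ENNReal.ofReal_mul' ENNReal.toReal_nonneg, hN] at hbound
  exact ⟨hbound, hbound.trans_lt (ENNReal.mul_lt_top ENNReal.ofReal_lt_top hk)⟩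

/-- Estimate (3.13): for `ϑ'' < ϑ` and `k ∈ K_{ϑ''}`,
`‖L^Δ k‖_ϑ ≤ 2((1 + ⟨b⟩e^ϑ)/(e(ϑ-ϑ'')) + 4b̄/(e²(ϑ-ϑ'')²)) ‖k‖_{ϑ''}`;
in particular `L^Δ` maps `K_{ϑ''}` boundedly into `K_ϑ`. -/
theorem LDelta_norm_bound (d : ℕ) (hd : 1 ≤ d) (A : JumpKernel d) (B : RateKernel d)
    (ω : ℝ) (hω : 0 ≤ ω) (ϑ'' ϑ : ℝ) (hϑ : ϑ'' < ϑ)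
    (k : CorrFun d) (hk : famNorm d k.k ϑ'' < ⊤) :
    famNorm d (LDelta d A B k.k) ϑ ≤
      ENNReal.ofReal (2 * ((1 + B.avg * Real.exp ϑ) / (Real.exp 1 * (ϑ - ϑ'')) +
        4 * B.bbar / (Real.exp 1 ^ 2 * (ϑ - ϑ'') ^ 2))) * famNorm d k.k ϑ'' ∧
    famNorm d (LDelta d A B k.k) ϑ < ⊤ :=
  LDelta_norm_bound_general d A B ϑ'' ϑ hϑ k hk

end Kawasaki
end

section
/- Sufficient condition for the stability assumption (condition (3.22) of the paper implies assumption (2.11)): Let d ≥ 1 and let α, κ₁, κ₂ : ℝ^d → [0,∞) be continuous, bounded, integrable, even functions with ∫ α = 1. Define a(x,y) := α(x−y), b(x,y|z) := κ₁(x−z) + κ₂(y−z), φ₊(x,y) := (α∗κ₁)(x−y) + κ₂(x−y), φ₋(x,y) := κ₁(x−y) + (α∗κ₂)(x−y), and Φ±(x₁,…,xₙ) := Σ_{i=1}^n Σ_{j≠i} φ±(x_i,x_j). Assume that (1 − α̂(p)) (κ̂₁(p) − κ̂₂(p)) ≥ 0 for all p ∈ ℝ^d, where f̂(p) := ∫ f(x)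 e^{i⟨p,x⟩} dx. Then ω := κ₁(0) − (α∗κ₁)(0) + (α∗κ₂)(0) − κ₂(0) satisfies ω ≥ 0 and Φ₊(x₁,…,xₙ) ≤ Φ₋(x₁,…,xₙ) + ω n for all n ≥ 1 and all (x₁,…,xₙ) ∈ (ℝ^d)ⁿ. -/
/-!
Put `G = (κ₁ - α ∗ κ₁) - (κ₂ - α ∗ κ₂)`. Then `φ₋(x, y) - φ₊(x, y) = G(x - y)`, `ω = G(0)` and
`Ĝ = (1 - α̂)(κ̂₁ - κ̂₂) ≥ 0`, so both claims follow from `∑ᵢ ∑ⱼ G(xᵢ - xⱼ) ≥ 0`, the diagonal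
contributing `n G(0) = n ω`. This positive definiteness is the easy half of Bochner's theorem.
Against the Gaussian weight `e^{-s²|p|²/4}`, the sum `∑ᵢ ∑ⱼ ∫ Ĝ(p) e^{-s²|p|²/4} cos⟨p, xᵢ - xⱼ⟩ dp`
is `∫ Ĝ(p) e^{-s²|p|²/4} |∑ⱼ e^{i⟨p, xⱼ⟩}|² dp ≥ 0`, and by Fubini and the Fourier transform of the
Gaussian each term is a positive multiple of the average of `G` over a Gaussian of width `s`
centred at `xᵢ - xⱼ`. Letting `s → 0⁺` gives the claim.
-/

open MeasureTheory Real Finset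

namespace Kawasaki

/-- Convolution `(f ∗ g)(u) = ∫ f(u - v) g(v) dv`. -/
noncomputable def conv (d : ℕ) (f g : Rd d → ℝ) (u : Rd d) : ℝ :=
  ∫ v, f (u - v) * g v

/-- The Fourier transform `f̂(p) = ∫ f(x) e^{i⟨p,x⟩} dx` of an even real-valued
integrable function is real-valued and equals `∫ f(x) cos⟨p,x⟩ dx`. -/
noncomputable def fourierEven (d : ℕ) (f : Rd d → ℝ) (p : Rd d) : ℝ :=
  ∫ x, f x * Real.cos (∑ i, p i * x i)

open Matrix Filter Convolution

variable {d : ℕ}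

section Fourier

variable {f : Rd d → ℝ}

lemma integrable_mul_cos (hf : Integrable f) {c : Rd d → ℝ} (hc : Continuous c) :
    Integrable fun x => f x * cos (c x) :=
  hf.mul_bdd (by fun_prop : Continuous _).aestronglyMeasurable
    (.of_forall fun x => by simpa using abs_cos_le_one (c x))

lemma integrable_mul_sin (hf : Integrable f) {c : Rd d → ℝ} (hc : Continuous c) :
    Integrable fun x => f x * sin (c x) :=
  hf.mul_bdd (by fun_prop : Continuous _).aestronglyMeasurable
    (.of_forall fun x => by simpa using abs_sin_le_one (c x))

lemma norm_mul_cos_le (a b : ℝ) : ‖a * cos b‖ ≤ |a| := by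
  rw [norm_mul, norm_eq_abs, norm_eq_abs]
  exact mul_le_of_le_one_right (abs_nonneg a) (abs_cos_le_one b)

lemma abs_fourierEven_le (hf : Integrable f) (p : Rd d) : |fourierEven d f p| ≤ ∫ x, |f x| :=
  (norm_integral_le_integral_norm _).trans (integral_mono_of_nonneg
    (.of_forall fun _ => norm_nonneg _) hf.abs (.of_forall fun _ => norm_mul_cos_le _ _))

lemma continuous_fourierEven (hf : Integrable f) : Continuous (fourierEven d f) :=
  continuous_of_dominated (fun p => (integrable_mul_cos hf (by fun_prop)).aestronglyMeasurable)
    (fun _ => .of_forall fun x => norm_mul_cos_le _ _) hf.abs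
    (.of_forall fun _ => by fun_prop)

lemma integral_mul_sin_dotProduct_of_even (hf : ∀ x, f (-x) = f x) (p : Rd d) :
    ∫ x, f x * sin (p ⬝ᵥ x) = 0 := by
  refine CharZero.eq_neg_self_iff.mp ?_
  conv_lhs => rw [← integral_neg_eq_self]
  rw [← integral_neg]
  simp only [hf, dotProduct_neg, sin_neg, mul_neg]

lemma fourierEven_sub {g : Rd d → ℝ} (hf : Integrable f) (hg : Integrable g) (p : Rd d) :
    fourierEven d (f - g) p = fourierEven d f p - fourierEven d g p := by
  simp only [fourierEven, Pi.sub_apply, sub_mul]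
  exact integral_sub (integrable_mul_cos hf (by fun_prop)) (integrable_mul_cos hg (by fun_prop))

lemma integral_comp_add_right_mul_cos (hf : Integrable f) (hfe : ∀ x, f (-x) = f x)
    (p y : Rd d) :
    ∫ x, f (x + y) * cos (p ⬝ᵥ x) = fourierEven d f p * cos (p ⬝ᵥ y) := by
  rw [← integral_sub_right_eq_self _ y]
  have hsplit : ∀ x, f (x - y + y) * cos (p ⬝ᵥ (x - y))
      = f x * cos (p ⬝ᵥ x) * cos (p ⬝ᵥ y) + f x * sin (p ⬝ᵥ x) * sin (p ⬝ᵥ y) := fun x => by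
    rw [sub_add_cancel, dotProduct_sub, cos_sub]; ring
  simp_rw [hsplit]
  rw [integral_add ((integrable_mul_cos hf (by fun_prop)).mul_const _)
      ((integrable_mul_sin hf (by fun_prop)).mul_const _),
    integral_mul_const, integral_mul_const, integral_mul_sin_dotProduct_of_even hfe, zero_mul,
    add_zero]
  rfl

end Fourier

section Convolution

variable {α κ : Rd d → ℝ}

lemma conv_eq_convolution : conv d α κ = α ⋆[ContinuousLinearMap.mul ℝ ℝ] κ :=
  funext fun _ => convolution_mul_swap.symm

lemma integrable_conv (hα : Integrable α) (hκ : Integrable κ) : Integrable (conv d α κ) := by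
  rw [conv_eq_convolution]
  exact hα.integrable_convolution _ hκ

lemma continuous_conv (hα : Integrable α) (hκ : Continuous κ) {C : ℝ} (hκC : ∀ x, |κ x| ≤ C) :
    Continuous (conv d α κ) := by
  rw [conv_eq_convolution]
  exact BddAbove.continuous_convolution_right_of_integrable _
    ⟨C, Set.forall_mem_range.2 hκC⟩ hα hκ

lemma conv_neg (hαe : ∀ x, α (-x) = α x) (hκe : ∀ x, κ (-x) = κ x) (u : Rd d) :
    conv d α κ (-u) = conv d α κ u := by
  rw [conv_eq_convolution]
  exact convolution_neg_of_neg_eq _ (.of_forall hαe) (.of_forall hκe)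

lemma abs_conv_le (hα : Integrable α) {C : ℝ} (hκC : ∀ x, |κ x| ≤ C) (u : Rd d) :
    |conv d α κ u| ≤ (∫ x, |α x|) * C := by
  calc |conv d α κ u| ≤ ∫ v, |α (u - v)| * C := by
        rw [← norm_eq_abs, conv]
        refine norm_integral_le_of_norm_le ((hα.comp_sub_left u).abs.mul_const C)
          (.of_forall fun v => ?_)
        rw [norm_mul, norm_eq_abs, norm_eq_abs]
        exact mul_le_mul_of_nonneg_left (hκC v) (abs_nonneg _)
    _ = (∫ x, |α x|) * C := by
        rw [integral_mul_const, integral_sub_left_eq_self (fun x => |α x|) volume u]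

lemma fourierEven_conv (hα : Integrable α) (hαe : ∀ x, α (-x) = α x) (hκ : Integrable κ)
    (p : Rd d) : fourierEven d (conv d α κ) p = fourierEven d α p * fourierEven d κ p := by
  have hker : Integrable (fun q : Rd d × Rd d => κ q.2 * α (q.1 - q.2) * cos (p ⬝ᵥ q.1))
      (volume.prod volume) :=
    (hκ.convolution_integrand (ContinuousLinearMap.mul ℝ ℝ) hα).mul_bdd
      (by fun_prop : Continuous _).aestronglyMeasurable
      (.of_forall fun q => by simpa using abs_cos_le_one _)
  calc fourierEven d (conv d α κ) p
      = ∫ u, ∫ v, κ v * α (u - v) * cos (p ⬝ᵥ u) := by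
        simp only [fourierEven, conv, ← integral_mul_const, mul_comm (α _)]
        rfl
    _ = ∫ v, κ v * ∫ u, α (u + -v) * cos (p ⬝ᵥ u) := by
        rw [integral_integral_swap hker]
        simp only [mul_assoc, integral_const_mul, sub_eq_add_neg]
    _ = fourierEven d α p * fourierEven d κ p := by
        simp only [integral_comp_add_right_mul_cos hα hαe, dotProduct_neg, cos_neg]
        rw [show fourierEven d κ p = ∫ v, κ v * cos (p ⬝ᵥ v) from rfl, ← integral_const_mul]
        congr 1 with v
        ring

end Convolution

section Gaussian

variable {t : ℝ}

lemma integrable_exp_neg_mul_dotProduct_self (ht : 0 < t) :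
    Integrable fun p : Rd d => exp (-t * (p ⬝ᵥ p)) := by
  have h : ∀ p : Rd d, exp (-t * (p ⬝ᵥ p)) = ∏ i, exp (-t * p i ^ 2) := fun p => by
    rw [← exp_sum, dotProduct, mul_sum]
    simp only [sq]
  simp_rw [h]
  exact Integrable.fintype_prod (f := fun _ x => exp (-t * x ^ 2))
    fun _ => integrable_exp_neg_mul_sq ht

lemma integral_exp_neg_mul_dotProduct_self_mul_cos (ht : 0 < t) (z : Rd d) :
    ∫ p : Rd d, exp (-t * (p ⬝ᵥ p)) * cos (p ⬝ᵥ z)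
      = (π / t) ^ ((d : ℝ) / 2) * exp (-(z ⬝ᵥ z) / (4 * t)) := by
  have ht' : 0 < (t : ℂ).re := by simpa using ht
  have hre : ∀ p : Rd d, exp (-t * (p ⬝ᵥ p)) * cos (p ⬝ᵥ z)
      = (Complex.exp (-t * ∑ i, (p i : ℂ) ^ 2 + ∑ i, Complex.I * z i * p i)).re := fun p => by
    have : -(t : ℂ) * ∑ i, (p i : ℂ) ^ 2 + ∑ i, Complex.I * z i * p i
        = ((-t * (p ⬝ᵥ p) : ℝ) : ℂ) + ((p ⬝ᵥ z : ℝ) : ℂ) * Complex.I := by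
      simp only [dotProduct]
      push_cast
      rw [sum_mul]
      congr 1
      · simp only [sq]
      · exact sum_congr rfl fun i _ => by ring
    rw [this, Complex.exp_re]
    simp
  have hsq : ∑ i, (Complex.I * z i) ^ 2 = ((-(z ⬝ᵥ z) : ℝ) : ℂ) := by
    simp only [mul_pow, Complex.I_sq, dotProduct]
    push_cast
    simp [sq, sum_neg_distrib]
  have hintegral := integral_re (GaussianFourier.integrable_cexp_neg_mul_sum_add ht'
    fun i => Complex.I * z i)
  simp only [RCLike.re_to_complex] at hintegral
  simp_rw [hre]
  rw [hintegral, GaussianFourier.integral_cexp_neg_mul_sum_add ht', hsq, Fintype.card_fin]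
  have hπt : 0 ≤ π / t := (div_pos pi_pos ht).le
  rw [show ((π : ℂ) / t) ^ ((d : ℂ) / 2) = (((π / t) ^ ((d : ℝ) / 2) : ℝ) : ℂ) by
      rw [Complex.ofReal_cpow hπt]; push_cast; rfl,
    show ((-(z ⬝ᵥ z) : ℝ) : ℂ) / (4 * t) = ((-(z ⬝ᵥ z) / (4 * t) : ℝ) : ℂ) by push_cast; rfl,
    ← Complex.ofReal_exp, ← Complex.ofReal_mul, Complex.ofReal_re]

lemma integral_fourierEven_mul_gaussian_mul_cos {f : Rd d → ℝ} (hf : Integrable f)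
    (hfe : ∀ x, f (-x) = f x) (ht : 0 < t) (y : Rd d) :
    ∫ p, fourierEven d f p * exp (-t * (p ⬝ᵥ p)) * cos (p ⬝ᵥ y)
      = (π / t) ^ ((d : ℝ) / 2) * ∫ x, f (x + y) * exp (-(x ⬝ᵥ x) / (4 * t)) := by
  have hprod : Integrable (fun q : Rd d × Rd d =>
      f (q.2 + y) * cos (q.1 ⬝ᵥ q.2) * exp (-t * (q.1 ⬝ᵥ q.1))) (volume.prod volume) := by
    refine ((integrable_exp_neg_mul_dotProduct_self ht).mul_prod (hf.comp_add_right y).abs).mono'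
      (((hf.comp_add_right y).aestronglyMeasurable.comp_snd.mul
        (by fun_prop : Continuous fun q : Rd d × Rd d => cos (q.1 ⬝ᵥ q.2)).aestronglyMeasurable).mul
        (by fun_prop : Continuous fun q : Rd d × Rd d =>
          exp (-t * (q.1 ⬝ᵥ q.1))).aestronglyMeasurable) (.of_forall fun q => ?_)
    rw [norm_mul, norm_of_nonneg (exp_pos _).le, mul_comm]
    exact mul_le_mul_of_nonneg_left (norm_mul_cos_le _ _) (exp_pos _).le
  calc ∫ p, fourierEven d f p * exp (-t * (p ⬝ᵥ p)) * cos (p ⬝ᵥ y)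
      = ∫ p, ∫ x, f (x + y) * cos (p ⬝ᵥ x) * exp (-t * (p ⬝ᵥ p)) := by
        congr 1 with p
        rw [integral_mul_const, integral_comp_add_right_mul_cos hf hfe]
        ring
    _ = ∫ x, f (x + y) * ∫ p, exp (-t * (p ⬝ᵥ p)) * cos (p ⬝ᵥ x) := by
        rw [integral_integral_swap hprod]
        congr 1 with x
        rw [← integral_const_mul]
        congr 1 with p
        ring
    _ = (π / t) ^ ((d : ℝ) / 2) * ∫ x, f (x + y) * exp (-(x ⬝ᵥ x) / (4 * t)) := by
        simp only [integral_exp_neg_mul_dotProduct_self_mul_cos ht, ← integral_const_mul]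
        congr 1 with x
        ring

lemma integral_mul_exp_neg_dotProduct_self_div_sq (f : Rd d → ℝ) {s : ℝ} (hs : 0 < s) :
    ∫ x, f x * exp (-(x ⬝ᵥ x) / s ^ 2) = s ^ d * ∫ u, f (s • u) * exp (-(u ⬝ᵥ u)) := by
  have hscale : ∀ u : Rd d, f (s • u) * exp (-(u ⬝ᵥ u))
      = f (s • u) * exp (-((s • u) ⬝ᵥ (s • u)) / s ^ 2) := fun u => by
    rw [smul_dotProduct, dotProduct_smul, smul_eq_mul, smul_eq_mul, ← mul_assoc, ← sq, neg_div,
      mul_div_cancel_left₀ _ (by positivity)]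
  simp_rw [hscale]
  rw [Measure.integral_comp_smul volume (fun x => f x * exp (-(x ⬝ᵥ x) / s ^ 2)),
    Module.finrank_fin_fun, abs_of_pos (by positivity), smul_eq_mul, ← mul_assoc,
    mul_inv_cancel₀ (by positivity), one_mul]

end Gaussian

noncomputable def gaussianAverage (g : Rd d → ℝ) (y : Rd d) (s : ℝ) : ℝ :=
  ∫ u, g (y + s • u) * exp (-(u ⬝ᵥ u))

lemma gaussianAverage_zero (g : Rd d → ℝ) (y : Rd d) :
    gaussianAverage g y 0 = g y * ∫ u : Rd d, exp (-(u ⬝ᵥ u)) := by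
  simp [gaussianAverage, integral_const_mul]

lemma continuous_gaussianAverage {g : Rd d → ℝ} (hg : Continuous g) {C : ℝ}
    (hgC : ∀ x, |g x| ≤ C) (y : Rd d) : Continuous (gaussianAverage g y) := by
  have hbound : Integrable fun u : Rd d => C * exp (-(u ⬝ᵥ u)) := by
    simpa using (integrable_exp_neg_mul_dotProduct_self one_pos).const_mul C
  refine continuous_of_dominated (fun _ => (by fun_prop : Continuous _).aestronglyMeasurable)
    (fun _ => .of_forall fun u => ?_) hbound (.of_forall fun _ => by fun_prop)
  rw [norm_mul, norm_of_nonneg (exp_pos _).le]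
  exact mul_le_mul_of_nonneg_right (hgC _) (exp_pos _).le

lemma integral_fourierEven_mul_gaussian_mul_cos_eq_gaussianAverage {g : Rd d → ℝ}
    (hg : Integrable g) (hge : ∀ x, g (-x) = g x) {s : ℝ} (hs : 0 < s) (y : Rd d) :
    ∫ p, fourierEven d g p * exp (-(s ^ 2 / 4) * (p ⬝ᵥ p)) * cos (p ⬝ᵥ y)
      = (π / (s ^ 2 / 4)) ^ ((d : ℝ) / 2) * s ^ d * gaussianAverage g y s := by
  rw [integral_fourierEven_mul_gaussian_mul_cos hg hge (by positivity),
    show 4 * (s ^ 2 / 4) = s ^ 2 by ring, integral_mul_exp_neg_dotProduct_self_div_sq _ hs,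
    mul_assoc]
  simp only [gaussianAverage, add_comm y]

structure IsRegularEven (g : Rd d → ℝ) : Prop where
  integrable : Integrable g
  continuous : Continuous g
  bounded : ∃ C, ∀ x, |g x| ≤ C
  even : ∀ x, g (-x) = g x

namespace IsRegularEven

variable {f g α : Rd d → ℝ}

lemma of_nonneg (hi : Integrable g) (hc : Continuous g) (hb : ∃ M, ∀ x, g x ≤ M)
    (he : ∀ x, g x = g (-x)) (hp : ∀ x, 0 ≤ g x) : IsRegularEven g where
  integrable := hi
  continuous := hc
  bounded := hb.imp fun _ hM x => (abs_of_nonneg (hp x)).trans_le (hM x)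
  even x := (he x).symm

lemma sub (hf : IsRegularEven f) (hg : IsRegularEven g) : IsRegularEven (f - g) where
  integrable := hf.integrable.sub hg.integrable
  continuous := hf.continuous.sub hg.continuous
  bounded := by
    obtain ⟨⟨C, hC⟩, ⟨D, hD⟩⟩ := And.intro hf.bounded hg.bounded
    exact ⟨C + D, fun x => (abs_sub _ _).trans (add_le_add (hC x) (hD x))⟩
  even x := by simp only [Pi.sub_apply, hf.even, hg.even]

lemma sub_conv (hg : IsRegularEven g) (hα : Integrable α) (hαe : ∀ x, α (-x) = α x) :
    IsRegularEven (g - conv d α g) := by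
  obtain ⟨C, hC⟩ := hg.bounded
  refine hg.sub ⟨integrable_conv hα hg.integrable, continuous_conv hα hg.continuous hC,
    ⟨_, abs_conv_le hα hC⟩, conv_neg hαe hg.even⟩

end IsRegularEven

lemma fourierEven_sub_conv {α κ : Rd d → ℝ} (hα : Integrable α) (hαe : ∀ x, α (-x) = α x)
    (hκ : Integrable κ) (p : Rd d) :
    fourierEven d (κ - conv d α κ) p = (1 - fourierEven d α p) * fourierEven d κ p := by
  rw [fourierEven_sub hκ (integrable_conv hα hκ), fourierEven_conv hα hαe hκ]
  ring

section PositiveDefinite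

variable {ι : Type*} [Fintype ι]

lemma sum_sum_cos_dotProduct_sub_nonneg (p : Rd d) (x : ι → Rd d) :
    0 ≤ ∑ i, ∑ j, cos (p ⬝ᵥ (x i - x j)) := by
  have h : ∑ i, ∑ j, cos (p ⬝ᵥ (x i - x j))
      = (∑ i, cos (p ⬝ᵥ x i)) ^ 2 + (∑ i, sin (p ⬝ᵥ x i)) ^ 2 := by
    simp only [dotProduct_sub, cos_sub, sq, sum_mul_sum, ← sum_add_distrib]
  rw [h]
  positivity

variable {g : Rd d → ℝ}

lemma sum_sum_gaussianAverage_nonneg (hg : Integrable g) (hge : ∀ x, g (-x) = g x)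
    (hhat : ∀ p, 0 ≤ fourierEven d g p) (x : ι → Rd d) {s : ℝ} (hs : 0 < s) :
    0 ≤ ∑ i, ∑ j, gaussianAverage g (x i - x j) s := by
  have ht : 0 < s ^ 2 / 4 := by positivity
  have hterm (y : Rd d) :
      Integrable fun p => fourierEven d g p * exp (-(s ^ 2 / 4) * (p ⬝ᵥ p)) * cos (p ⬝ᵥ y) :=
    integrable_mul_cos ((integrable_exp_neg_mul_dotProduct_self ht).bdd_mul
      (continuous_fourierEven hg).aestronglyMeasurable
      (.of_forall fun p => abs_fourierEven_le hg p)) (by fun_prop)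
  have hsum : 0 ≤ ∑ i, ∑ j,
      ∫ p, fourierEven d g p * exp (-(s ^ 2 / 4) * (p ⬝ᵥ p)) * cos (p ⬝ᵥ (x i - x j)) := by
    simp only [← integral_finsetSum _ fun _ _ => hterm _]
    rw [← integral_finsetSum _ fun _ _ => integrable_finsetSum _ fun _ _ => hterm _]
    refine integral_nonneg fun p => ?_
    simp only [← mul_sum]
    exact mul_nonneg (mul_nonneg (hhat p) (exp_pos _).le) (sum_sum_cos_dotProduct_sub_nonneg p x)
  simp only [integral_fourierEven_mul_gaussian_mul_cos_eq_gaussianAverage hg hge hs,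
    ← mul_sum] at hsum
  exact nonneg_of_mul_nonneg_right hsum (by positivity)

lemma IsRegularEven.sum_sum_nonneg_of_fourierEven_nonneg (hg : IsRegularEven g)
    (hhat : ∀ p, 0 ≤ fourierEven d g p) (x : ι → Rd d) :
    0 ≤ ∑ i, ∑ j, g (x i - x j) := by
  obtain ⟨hgi, hgc, ⟨C, hgC⟩, hge⟩ := hg
  set F : ℝ → ℝ := fun s => ∑ i, ∑ j, gaussianAverage g (x i - x j) s
  have hF : Continuous F := continuous_finsetSum _ fun _ _ =>
    continuous_finsetSum _ fun _ _ => continuous_gaussianAverage hgc hgC _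
  have hF0 : 0 ≤ F 0 :=
    ge_of_tendsto (hF.tendsto 0 |>.mono_left nhdsWithin_le_nhds)
      (eventually_nhdsWithin_of_forall (s := Set.Ioi 0) fun _ hs =>
        sum_sum_gaussianAverage_nonneg hgi hge hhat x hs)
  have hgauss : 0 < ∫ u : Rd d, exp (-(u ⬝ᵥ u)) :=
    integral_exp_pos (by simpa using integrable_exp_neg_mul_dotProduct_self (d := d) one_pos)
  simp only [F, gaussianAverage_zero, ← sum_mul] at hF0
  exact nonneg_of_mul_nonneg_left hF0 hgauss

end PositiveDefinite

lemma sum_sum_eq_card_mul_add_sum_sum_erase {ι : Type*} [Fintype ι] [DecidableEq ι]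
    {E : Type*} [AddGroup E] (g : E → ℝ) (x : ι → E) :
    ∑ i, ∑ j, g (x i - x j) = Fintype.card ι * g 0 + ∑ i, ∑ j ∈ univ.erase i, g (x i - x j) := by
  rw [← card_univ, ← nsmul_eq_mul, ← sum_const, ← sum_add_distrib]
  exact sum_congr rfl fun i _ => by rw [← add_sum_erase _ _ (mem_univ i), sub_self]

theorem sufficient_condition_for_stability_general (d : ℕ)
    (α κ₁ κ₂ : Rd d → ℝ)
    (hκ₁_cont : Continuous κ₁) (hκ₂_cont : Continuous κ₂)
    (hκ₁_bdd : ∃ M, ∀ x, κ₁ x ≤ M)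
    (hκ₂_bdd : ∃ M, ∀ x, κ₂ x ≤ M)
    (hα_int : Integrable α) (hκ₁_int : Integrable κ₁) (hκ₂_int : Integrable κ₂)
    (hα_even : ∀ x, α x = α (-x)) (hκ₁_even : ∀ x, κ₁ x = κ₁ (-x))
    (hκ₂_even : ∀ x, κ₂ x = κ₂ (-x))
    (hκ₁_pos : ∀ x, 0 ≤ κ₁ x) (hκ₂_pos : ∀ x, 0 ≤ κ₂ x)
    (hft : ∀ p : Rd d, 0 ≤ (1 - fourierEven d α p) * (fourierEven d κ₁ p - fourierEven d κ₂ p))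
    (φp φm : Rd d → Rd d → ℝ)
    (hφp : ∀ x y, φp x y = conv d α κ₁ (x - y) + κ₂ (x - y))
    (hφm : ∀ x y, φm x y = κ₁ (x - y) + conv d α κ₂ (x - y))
    (ω : ℝ) (hωdef : ω = κ₁ 0 - conv d α κ₁ 0 + conv d α κ₂ 0 - κ₂ 0) :
    0 ≤ ω ∧
    ∀ n : ℕ, 1 ≤ n → ∀ x : Fin n → Rd d,
      (∑ i : Fin n, ∑ j ∈ Finset.univ.erase i, φp (x i) (x j)) ≤
        (∑ i : Fin n, ∑ j ∈ Finset.univ.erase i, φm (x i) (x j)) + ω * n := by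
  have hαe : ∀ x, α (-x) = α x := fun x => (hα_even x).symm
  set G := (κ₁ - conv d α κ₁) - (κ₂ - conv d α κ₂)
  have hG : IsRegularEven G :=
    ((IsRegularEven.of_nonneg hκ₁_int hκ₁_cont hκ₁_bdd hκ₁_even hκ₁_pos).sub_conv hα_int hαe).sub
      ((IsRegularEven.of_nonneg hκ₂_int hκ₂_cont hκ₂_bdd hκ₂_even hκ₂_pos).sub_conv hα_int hαe)
  have hGhat : ∀ p, 0 ≤ fourierEven d G p := fun p => by
    rw [fourierEven_sub (hκ₁_int.sub (integrable_conv hα_int hκ₁_int))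
      (hκ₂_int.sub (integrable_conv hα_int hκ₂_int)), fourierEven_sub_conv hα_int hαe hκ₁_int,
      fourierEven_sub_conv hα_int hαe hκ₂_int, ← mul_sub]
    exact hft p
  have hpd (n : ℕ) (x : Fin n → Rd d) : 0 ≤ ∑ i, ∑ j, G (x i - x j) :=
    hG.sum_sum_nonneg_of_fourierEven_nonneg hGhat x
  have hωG : ω = G 0 := by simp only [hωdef, G, Pi.sub_apply]; ring
  refine ⟨?_, fun n _ x => ?_⟩
  · simpa [hωG] using hpd 1 0
  · have hφ : ∀ i j, φm (x i) (x j) - φp (x i) (x j) = G (x i - x j) := fun i j => by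
      simp only [hφm, hφp, G, Pi.sub_apply]; ring
    have := hpd n x
    rw [sum_sum_eq_card_mul_add_sum_sum_erase, Fintype.card_fin] at this
    simp only [← hφ, sum_sub_distrib] at this
    rw [hωG]
    linarith

/-- Condition (3.22) implies the stability assumption (2.11): if `α, κ₁, κ₂` are
continuous, bounded, integrable, even, nonnegative, `∫α = 1`, and
`(1 - α̂(p))(κ̂₁(p) - κ̂₂(p)) ≥ 0` for all `p`, then with
`ω = κ₁(0) - (α∗κ₁)(0) + (α∗κ₂)(0) - κ₂(0)`, `φ₊ = (α∗κ₁) + κ₂`,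
`φ₋ = κ₁ + (α∗κ₂)` one has `ω ≥ 0` and `Φ₊ ≤ Φ₋ + ωn` for all `n ≥ 1` and tuples. -/
theorem sufficient_condition_for_stability (d : ℕ) (hd : 1 ≤ d)
    (α κ₁ κ₂ : Rd d → ℝ)
    (hα_cont : Continuous α) (hκ₁_cont : Continuous κ₁) (hκ₂_cont : Continuous κ₂)
    (hα_bdd : ∃ M, ∀ x, α x ≤ M) (hκ₁_bdd : ∃ M, ∀ x, κ₁ x ≤ M)
    (hκ₂_bdd : ∃ M, ∀ x, κ₂ x ≤ M)
    (hα_int : Integrable α) (hκ₁_int : Integrable κ₁) (hκ₂_int : Integrable κ₂)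
    (hα_even : ∀ x, α x = α (-x)) (hκ₁_even : ∀ x, κ₁ x = κ₁ (-x))
    (hκ₂_even : ∀ x, κ₂ x = κ₂ (-x))
    (hα_pos : ∀ x, 0 ≤ α x) (hκ₁_pos : ∀ x, 0 ≤ κ₁ x) (hκ₂_pos : ∀ x, 0 ≤ κ₂ x)
    (hα_one : (∫ x, α x) = 1)
    (hft : ∀ p : Rd d, 0 ≤ (1 - fourierEven d α p) * (fourierEven d κ₁ p - fourierEven d κ₂ p))
    (φp φm : Rd d → Rd d → ℝ)
    (hφp : ∀ x y, φp x y = conv d α κ₁ (x - y) + κ₂ (x - y))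
    (hφm : ∀ x y, φm x y = κ₁ (x - y) + conv d α κ₂ (x - y))
    (ω : ℝ) (hωdef : ω = κ₁ 0 - conv d α κ₁ 0 + conv d α κ₂ 0 - κ₂ 0) :
    0 ≤ ω ∧
    ∀ n : ℕ, 1 ≤ n → ∀ x : Fin n → Rd d,
      (∑ i : Fin n, ∑ j ∈ Finset.univ.erase i, φp (x i) (x j)) ≤
        (∑ i : Fin n, ∑ j ∈ Finset.univ.erase i, φm (x i) (x j)) + ω * n :=
  sufficient_condition_for_stability_general d α κ₁ κ₂ hκ₁_cont hκ₂_cont hκ₁_bdd hκ₂_bdd hα_int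
    hκ₁_int hκ₂_int hα_even hκ₁_even hκ₂_even hκ₁_pos hκ₂_pos hft φp φm hφp hφm ω hωdef

end Kawasaki
end
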